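/- Let b ∈ (0,1), μ₀ > 0, σ₀ < 0, r > 0, and let θ ∈ ℝ satisfy cos²θ > (σ₀² r + b μ₀)/(−σ₀ b μ₀ r). Then the 2×2 symmetric matrix ĝ(θ) with entries ĝ₁₁ = 1/σ₀ + r cos²θ, ĝ₁₂ = ĝ₂₁ = −(σ₀/μ₀) r cos θ, ĝ₂₂ = b/μ₀ + σ₀² r/μ₀² is positive definite; in particular ĝ₁₁ > 0, ĝ₂₂ > 0, and det ĝ = b/(σ₀ μ₀) + (b r/μ₀) cos²θ + σ₀ r/μ₀² > 0. -/

import Mathlib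

/-!
Clearing the denominator in the hypothesis on `cos²θ` gives
`σ₀² r + b μ₀ + σ₀ b μ₀ r cos²θ < 0`. This numerator, divided by `σ₀ μ₀² < 0`, is `det ĝ`,
and it also forces `1 + σ₀ r cos²θ < 0`, i.e. `ĝ₁₁ > 0`. A symmetric `2 × 2` matrix with
positive leading entry and positive determinant is positive definite, because
`a (a x² + 2 c x y + d y²) = (a x + c y)² + (a d - c²) y²`.
-/

open Real Set Matrix

theorem Matrix.posDef_fin_two_of_pos_of_det_pos {𝕜 : Type*} [Field 𝕜] [LinearOrder 𝕜]
    [IsStrictOrderedRing 𝕜] [StarRing 𝕜] [TrivialStar 𝕜] {a c d : 𝕜} (ha : 0 < a)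
    (hdet : 0 < (!![a, c; c, d]).det) : (!![a, c; c, d]).PosDef := by
  rw [det_fin_two_of] at hdet
  refine .of_dotProduct_mulVec_pos ?_ fun x hx => ?_
  · ext i j
    fin_cases i <;> fin_cases j <;> simp
  have hquad : star x ⬝ᵥ !![a, c; c, d] *ᵥ x = a * x 0 ^ 2 + 2 * c * x 0 * x 1 + d * x 1 ^ 2 := by
    simp only [star_trivial, dotProduct, mulVec, Fin.sum_univ_two, cons_val', cons_val_zero,
      cons_val_one, empty_val', cons_val_fin_one, of_apply]
    ring
  have hsq : a * (a * x 0 ^ 2 + 2 * c * x 0 * x 1 + d * x 1 ^ 2)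
      = (a * x 0 + c * x 1) ^ 2 + (a * d - c * c) * x 1 ^ 2 := by
    ring
  rw [hquad]
  refine pos_of_mul_pos_right (hsq ▸ ?_) ha.le
  by_cases hx1 : x 1 = 0
  · have hx0 : x 0 ≠ 0 := fun hx0 => hx (funext fun i => by fin_cases i <;> assumption)
    have : 0 < (a * x 0) ^ 2 := by positivity
    simpa [hx1] using this
  · exact add_pos_of_nonneg_of_pos (sq_nonneg _) (mul_pos hdet (by positivity))

/-- The controlled mass matrix `ĝ(θ)`, written in terms of `c = cos θ`. -/
noncomputable def massMatrix (b μ₀ σ₀ r c : ℝ) : Matrix (Fin 2) (Fin 2) ℝ :=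
  !![1 / σ₀ + r * c ^ 2, -(σ₀ / μ₀) * r * c; -(σ₀ / μ₀) * r * c, b / μ₀ + σ₀ ^ 2 * r / μ₀ ^ 2]

section MassMatrix

variable {b μ₀ σ₀ r c : ℝ}

theorem massMatrix_det (hμ₀ : μ₀ ≠ 0) (hσ₀ : σ₀ ≠ 0) :
    (massMatrix b μ₀ σ₀ r c).det = b / (σ₀ * μ₀) + (b * r / μ₀) * c ^ 2 + σ₀ * r / μ₀ ^ 2 := by
  rw [massMatrix, det_fin_two_of]
  field_simp
  ring

theorem massMatrix_det_pos (hμ₀ : 0 < μ₀) (hσ₀ : σ₀ < 0)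
    (h : σ₀ ^ 2 * r + b * μ₀ + σ₀ * b * μ₀ * r * c ^ 2 < 0) :
    0 < (massMatrix b μ₀ σ₀ r c).det := by
  have hquot : (massMatrix b μ₀ σ₀ r c).det
      = (σ₀ ^ 2 * r + b * μ₀ + σ₀ * b * μ₀ * r * c ^ 2) / (σ₀ * μ₀ ^ 2) := by
    rw [massMatrix_det hμ₀.ne' hσ₀.ne]
    field_simp [hσ₀.ne]
    ring
  rw [hquot]
  exact div_pos_of_neg_of_neg h (mul_neg_of_neg_of_pos hσ₀ (by positivity))

theorem massMatrix_entry_zero_zero_pos (hb : 0 < b) (hμ₀ : 0 < μ₀) (hσ₀ : σ₀ < 0) (hr : 0 ≤ r)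
    (h : σ₀ ^ 2 * r + b * μ₀ + σ₀ * b * μ₀ * r * c ^ 2 < 0) :
    0 < 1 / σ₀ + r * c ^ 2 := by
  have hquot : 1 / σ₀ + r * c ^ 2 = (1 + σ₀ * r * c ^ 2) / σ₀ := by
    field_simp [hσ₀.ne]
  have hnum : b * μ₀ * (1 + σ₀ * r * c ^ 2) < 0 := by nlinarith [mul_nonneg (sq_nonneg σ₀) hr]
  rw [hquot]
  exact div_pos_of_neg_of_neg (neg_of_mul_neg_right hnum (by positivity)) hσ₀

theorem massMatrix_posDef (hb : 0 < b) (hμ₀ : 0 < μ₀) (hσ₀ : σ₀ < 0) (hr : 0 ≤ r)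
    (h : σ₀ ^ 2 * r + b * μ₀ + σ₀ * b * μ₀ * r * c ^ 2 < 0) :
    (massMatrix b μ₀ σ₀ r c).PosDef :=
  posDef_fin_two_of_pos_of_det_pos (massMatrix_entry_zero_zero_pos hb hμ₀ hσ₀ hr h)
    (massMatrix_det_pos hμ₀ hσ₀ h)

end MassMatrix

theorem statement10 (b μ₀ σ₀ r θ : ℝ) (hb : b ∈ Ioo (0 : ℝ) 1)
    (hμ₀ : 0 < μ₀) (hσ₀ : σ₀ < 0) (hr : 0 < r)
    (hθ : Real.cos θ ^ 2 > (σ₀ ^ 2 * r + b * μ₀) / (-σ₀ * b * μ₀ * r)) :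
    (!![1 / σ₀ + r * Real.cos θ ^ 2, -(σ₀ / μ₀) * r * Real.cos θ;
        -(σ₀ / μ₀) * r * Real.cos θ, b / μ₀ + σ₀ ^ 2 * r / μ₀ ^ 2]).PosDef ∧
    0 < 1 / σ₀ + r * Real.cos θ ^ 2 ∧
    0 < b / μ₀ + σ₀ ^ 2 * r / μ₀ ^ 2 ∧
    (!![1 / σ₀ + r * Real.cos θ ^ 2, -(σ₀ / μ₀) * r * Real.cos θ;
        -(σ₀ / μ₀) * r * Real.cos θ, b / μ₀ + σ₀ ^ 2 * r / μ₀ ^ 2]).det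
      = b / (σ₀ * μ₀) + (b * r / μ₀) * Real.cos θ ^ 2 + σ₀ * r / μ₀ ^ 2 ∧
    0 < b / (σ₀ * μ₀) + (b * r / μ₀) * Real.cos θ ^ 2 + σ₀ * r / μ₀ ^ 2 := by
  obtain ⟨hb, -⟩ := hb
  have hden : 0 < -σ₀ * b * μ₀ * r := by
    have := neg_pos.2 hσ₀
    positivity
  have h : σ₀ ^ 2 * r + b * μ₀ + σ₀ * b * μ₀ * r * Real.cos θ ^ 2 < 0 := by
    have := (div_lt_iff₀ hden).1 hθ
    linarith
  have hdet := massMatrix_det (b := b) (r := r) (c := Real.cos θ) hμ₀.ne' hσ₀.ne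
  exact ⟨massMatrix_posDef hb hμ₀ hσ₀ hr.le h, massMatrix_entry_zero_zero_pos hb hμ₀ hσ₀ hr.le h,
    by positivity, hdet, hdet ▸ massMatrix_det_pos hμ₀ hσ₀ h⟩
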